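/- The subshift S generated by the words w_n is minimal: for every word u in the language of S there exists N such that every word of length N in the language of S contains u as a subword. In fact, if u appears in w_n, then every word of length 2·|w_n| + 1 in the language contains u. -/

import Mathlib

inductive GLetter | a | B | C | D
deriving DecidableEq

def alphaN (n : ℕ) : GLetter :=
  if n % 3 = 0 then GLetter.B else if n % 3 = 1 then GLetter.D else GLetter.C

def w : ℕ → List GLetter
  | 0 => []
  | 1 => [GLetter.a]
  | (n+2) => w (n+1) ++ [alphaN (n+1)] ++ w (n+1)

/-- A word is in the language of the subshift `S` iff it is a subword of some `w n`. -/
def inLanguage (u : List GLetter) : Prop := ∃ n : ℕ, 1 ≤ n ∧ u <:+: w n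

/-! A word `w n` (`n ≥ 1`) is both a prefix and a suffix of every `w m` with `m ≥ n`. A window
of length `2 |w n| + 1` in `w (m + 1) = w m ++ α :: w m` either lies inside one copy of `w m`,
where induction on `m` applies, or meets the middle letter; then it covers at least `|w n|`
letters of the left copy's end or of the right copy's beginning, and so contains `w n`. -/

namespace List

variable {α : Type*} {u x v : List α} {c : α}

theorem infix_of_prefix_cons (hu : u <+: x) (hv : v <+: c :: x) (hlen : u.length < v.length) :
    u <:+: v := by
  obtain rfl | ⟨t, rfl, ht⟩ := prefix_cons_iff.mp hv
  · simp at hlen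
  · have hut : u <+: t := prefix_of_prefix_length_le hu ht (by simp at hlen; omega)
    exact infix_cons hut.isInfix

theorem infix_or_infix_of_infix_append_cons (hpre : u <+: x) (hsuf : u <:+ x)
    (hv : v <:+: x ++ c :: x) (hlen : 2 * u.length + 1 ≤ v.length) :
    v <:+: x ∨ u <:+: v := by
  rcases infix_append_iff.mp hv with hx | hcx | ⟨s, p, rfl, hs, hp⟩
  · exact .inl hx
  · rcases infix_cons_iff.mp hcx with hv' | hx
    · exact .inr (infix_of_prefix_cons hpre hv' (by omega))
    · exact .inl hx
  · right
    rw [length_append] at hlen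
    by_cases hus : u.length ≤ s.length
    · exact (suffix_of_suffix_length_le hsuf hs hus).isInfix.trans infix_append_left
    · exact (infix_of_prefix_cons hpre hp (by omega)).trans infix_append_right

end List

theorem w_succ {m : ℕ} (hm : 1 ≤ m) : w (m + 1) = w m ++ alphaN m :: w m := by
  obtain ⟨k, rfl⟩ := Nat.exists_eq_add_of_le' hm
  simp [w]

theorem w_prefix_w {n m : ℕ} (hn : 1 ≤ n) (hnm : n ≤ m) : w n <+: w m := by
  induction m, hnm using Nat.le_induction with
  | base => exact List.prefix_rfl
  | succ m hnm ih => exact ih.trans (w_succ (hn.trans hnm) ▸ List.prefix_append _ _)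

theorem w_suffix_w {n m : ℕ} (hn : 1 ≤ n) (hnm : n ≤ m) : w n <:+ w m := by
  induction m, hnm using Nat.le_induction with
  | base => exact List.suffix_rfl
  | succ m hnm ih =>
    refine ih.trans (w_succ (hn.trans hnm) ▸ ?_)
    exact (List.suffix_cons _ _).trans (List.suffix_append _ _)

theorem w_infix_of_infix_w {n : ℕ} (hn : 1 ≤ n) {m : ℕ} {v : List GLetter} (hv : v <:+: w m)
    (hlen : 2 * (w n).length + 1 ≤ v.length) : w n <:+: v := by
  induction m generalizing v with
  | zero => simp [List.infix_nil.mp hv] at hlen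
  | succ m ih =>
    rcases Nat.lt_or_ge m n with hmn | hnm
    · have := (w_prefix_w (n := m + 1) (by omega) hmn).length_le
      have := hv.length_le
      omega
    · rw [w_succ (hn.trans hnm)] at hv
      rcases List.infix_or_infix_of_infix_append_cons (w_prefix_w hn hnm) (w_suffix_w hn hnm)
        hv hlen with h | h
      · exact ih h hlen
      · exact h

theorem infix_of_inLanguage {n : ℕ} (hn : 1 ≤ n) {u v : List GLetter} (hu : u <:+: w n)
    (hv : inLanguage v) (hlen : 2 * (w n).length + 1 ≤ v.length) : u <:+: v := by
  obtain ⟨m, -, hvm⟩ := hv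
  exact hu.trans (w_infix_of_infix_w hn hvm hlen)

theorem stmt5 :
    (∀ u : List GLetter, inLanguage u →
      ∃ N : ℕ, ∀ v : List GLetter, inLanguage v → v.length = N → u <:+: v) ∧
    (∀ n : ℕ, 1 ≤ n → ∀ u : List GLetter, u <:+: w n →
      ∀ v : List GLetter, inLanguage v → v.length = 2 * (w n).length + 1 → u <:+: v) := by
  refine ⟨?_, fun n hn u hu v hv hlen => infix_of_inLanguage hn hu hv hlen.ge⟩
  rintro u ⟨n, hn, hu⟩
  exact ⟨_, fun v hv hlen => infix_of_inLanguage hn hu hv hlen.ge⟩
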